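/- Let a_1,...,a_d be a free family of standard semicircular elements in a *-probability space (𝒜, φ), and let y = Σ_{i=1}^d a_i² ⊗ a_i² in (𝒜 ⊗ 𝒜, φ ⊗ φ). Then for every n ∈ ℕ, (φ⊗φ)(y^n) = Σ_{π,ρ ∈ NC(n)} d^{|π ∨̃ ρ|}, where ∨̃ is the join in the lattice of all partitions of {1,...,n} and |·| denotes the number of blocks. -/

import Mathlib

/-!
Expanding `y ^ n` over words `g : Fin n → Fin d`, each word contributes
`φ (a_{g 1}² ⋯ a_{g n}²) ^ 2`. By freeness this moment counts the non-crossing pairings of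
`Fin (2n)` below `ker (g ∘ halve)`, and the arch construction `π ↦ archSetoid π` maps the
non-crossing partitions of `Fin n` below `ker g` bijectively onto them: the inverse sends a
pairing to the orbits of `j ↦ ⌊partner (2j+1) / 2⌋`, a permutation whose increasing block
cycle `nextP` is itself. Finally, by double counting,
`∑_g #{π ≤ ker g}² = ∑_{π,ρ} #{g | π ⊔ ρ ≤ ker g} = ∑_{π,ρ} d ^ |π ⊔ ρ|`.
-/

open scoped Classical

/-- A setoid (partition) of `Fin n` is non-crossing if there is no crossing
`a < b < c < d` with `a ∼ c`, `b ∼ d` but `a` and `b` in distinct blocks. -/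
def IsNC {n : ℕ} (S : Setoid (Fin n)) : Prop :=
  ∀ a b c d : Fin n, a < b → b < c → c < d → S.r a c → S.r b d → S.r a b

/-- A partition is a pairing if every block has exactly two elements. -/
def IsPairing {m : ℕ} (T : Setoid (Fin m)) : Prop :=
  ∀ x : Fin m, ∃ y : Fin m, y ≠ x ∧ T.r x y ∧ ∀ z : Fin m, T.r x z → z = x ∨ z = y

/-- The block of `i` in the partition `S`, as a finset. -/
noncomputable def blockOf {n : ℕ} (S : Setoid (Fin n)) (i : Fin n) : Finset (Fin n) :=
  Finset.univ.filter (fun j => S.r i j)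

lemma blockOf_nonempty {n : ℕ} (S : Setoid (Fin n)) (i : Fin n) :
    (blockOf S i).Nonempty :=
  ⟨i, by simp [blockOf, S.iseqv.refl i]⟩

/-- The permutation `P_S` which performs an increasing cycle on every block of `S`:
it sends `i` to the next larger element of its block, or to the minimum of the
block if `i` is the largest element of its block. -/
noncomputable def nextP {n : ℕ} (S : Setoid (Fin n)) (i : Fin n) : Fin n :=
  if h : ((blockOf S i).filter (fun j => i < j)).Nonempty
  then ((blockOf S i).filter (fun j => i < j)).min' h
  else (blockOf S i).min' (blockOf_nonempty S i)

/-- The inverse permutation `P_S⁻¹` (decreasing cycle on every block of `S`). -/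
noncomputable def prevP {n : ℕ} (S : Setoid (Fin n)) (i : Fin n) : Fin n :=
  if h : ((blockOf S i).filter (fun j => j < i)).Nonempty
  then ((blockOf S i).filter (fun j => j < i)).max' h
  else (blockOf S i).max' (blockOf_nonempty S i)

/-- `0`-indexed version of the point `2i-1` of `{1,…,2n}`. -/
def dEven {n : ℕ} (j : Fin n) : Fin (2*n) := ⟨2*j.val, by have := j.isLt; omega⟩

/-- `0`-indexed version of the point `2i` of `{1,…,2n}`. -/
def dOdd {n : ℕ} (j : Fin n) : Fin (2*n) := ⟨2*j.val+1, by have := j.isLt; omega⟩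

/-- The doubling construction `π ↦ A(π)`: the pairing of `{1,…,2n}` generated by
pairing each point `2i` with `2P_π(i) - 1`, so that the associated permutation
satisfies `P_{A(π)}(2i) = 2P_π(i) - 1` and `P_{A(π)}(2i-1) = 2P_π⁻¹(i)`. -/
noncomputable def archSetoid {n : ℕ} (S : Setoid (Fin n)) : Setoid (Fin (2*n)) :=
  Relation.EqvGen.setoid (fun a b => ∃ j : Fin n, a = dOdd j ∧ b = dEven (nextP S j))

/-- The meandric system permutation `M_{π,ρ} ∈ S_{2n}`, defined by
`M_{π,ρ}(2i-1) = 2P_π⁻¹(i)` and `M_{π,ρ}(2i) = 2P_ρ(i) - 1` (here `0`-indexed). -/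
noncomputable def meanderMap {n : ℕ} (π ρ : Setoid (Fin n)) (x : Fin (2*n)) : Fin (2*n) :=
  if x.val % 2 = 0
  then dOdd (prevP π ⟨x.val / 2, by have := x.isLt; omega⟩)
  else dEven (nextP ρ ⟨x.val / 2, by have := x.isLt; omega⟩)

/-- The orbit partition of a map. -/
def orbitSetoid {m : ℕ} (f : Fin m → Fin m) : Setoid (Fin m) :=
  Relation.EqvGen.setoid (fun a b => f a = b)

/-- Number of orbits of a map. -/
noncomputable def numOrbits {m : ℕ} (f : Fin m → Fin m) : ℕ :=
  Nat.card (Quotient (orbitSetoid f))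

/-- `S` is a union of blocks of the partition `T`. -/
def IsBlockUnion {m : ℕ} (T : Setoid (Fin m)) (S : Set (Fin m)) : Prop :=
  ∀ x ∈ S, ∀ y, T.r x y → y ∈ S

/-- `S` is invariant under `f`. -/
def MInvariant {m : ℕ} (f : Fin m → Fin m) (S : Set (Fin m)) : Prop :=
  ∀ x ∈ S, f x ∈ S

/-- The meandric system `M_{π,ρ}` is reducible: some proper subinterval
`{a,…,b}` of `{1,…,2n}` is invariant under `M_{π,ρ}`. -/
noncomputable def Reducible {n : ℕ} (π ρ : Setoid (Fin n)) : Prop :=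
  ∃ a b : Fin (2*n), a ≤ b ∧ b.val - a.val < 2*n - 1 ∧
    MInvariant (meanderMap π ρ) {x | a ≤ x ∧ x ≤ b}

/-- The join in the lattice of non-crossing partitions: the smallest
non-crossing partition above both `π` and `ρ`. -/
noncomputable def ncJoin {m : ℕ} (π ρ : Setoid (Fin m)) : Setoid (Fin m) :=
  sInf {τ | IsNC τ ∧ π ≤ τ ∧ ρ ≤ τ}

/-- The moment-cumulant formula of free probability: `mom n` is the sum over all
non-crossing partitions of `{1,…,n}` of the products of cumulants `κ` indexed
by the block sizes.  This uniquely determines the free cumulants `κ n`, `n ≥ 1`,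
of a sequence of moments. -/
def MomCum {F : Type*} [Field F] (mom κ : ℕ → F) : Prop :=
  ∀ n : ℕ, 0 < n →
    mom n = ∑ᶠ S ∈ {S : Setoid (Fin n) | IsNC S}, ∏ᶠ B ∈ Setoid.classes S, κ B.ncard

/-- The number of irreducible meandric systems on `2k` bridges, described as the
number of pairs `(π,ρ) ∈ NC(k)²` with `π ∨ ρ = 1_k`, `π ∧ ρ = 0_k`. -/
noncomputable def mirr (k : ℕ) : ℕ :=
  Nat.card {pr : Setoid (Fin k) × Setoid (Fin k) //
    IsNC pr.1 ∧ IsNC pr.2 ∧ ncJoin pr.1 pr.2 = ⊤ ∧ pr.1 ⊓ pr.2 = ⊥}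

/-- The number of pairs `(π,ρ) ∈ NC(n)²` whose meandric system `M_{π,ρ}` has
exactly `k` orbits (connected components). -/
noncomputable def mcount (n k : ℕ) : ℕ :=
  Nat.card {pr : Setoid (Fin n) × Setoid (Fin n) //
    IsNC pr.1 ∧ IsNC pr.2 ∧ numOrbits (meanderMap pr.1 pr.2) = k}

/-- The number of meanders on `2n` bridges. -/
noncomputable def meanderNum (n : ℕ) : ℕ := mcount n 1

theorem Function.Involutive.even_card_of_forall_ne {α : Type*} [Fintype α] {f : α → α}
    (hf : Function.Involutive f) (hne : ∀ x, f x ≠ x) : Even (Fintype.card α) := by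
  have h := Equiv.Perm.card_fixedPoints_modEq (f := (f : Function.End α)) (p := 2) (n := 1)
    (funext hf)
  have h0 : Fintype.card (Function.fixedPoints (f : Function.End α)) = 0 :=
    Fintype.card_eq_zero_iff.mpr ⟨fun x => hne x.1 x.2⟩
  rw [h0] at h
  exact Nat.even_iff.mpr h

theorem sum_pow_eq_sum_prod_ofFn {A ι : Type*} [Semiring A] [Fintype ι] (f : ι → A) (n : ℕ) :
    (∑ i, f i) ^ n = ∑ g : Fin n → ι, (List.ofFn fun k => f (g k)).prod := by
  induction n with
  | zero => simp
  | succ n ih =>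
    rw [pow_succ', ih, Finset.sum_mul_sum, ← (Fin.consEquiv fun _ => ι).sum_comp,
      Fintype.sum_prod_type]
    simp [List.ofFn_succ]

theorem Algebra.TensorProduct.list_prod_ofFn_tmul {R A B : Type*} [CommSemiring R]
    [Semiring A] [Semiring B] [Algebra R A] [Algebra R B] {n : ℕ} (x : Fin n → A)
    (y : Fin n → B) :
    (List.ofFn fun k => x k ⊗ₜ[R] y k).prod =
      (List.ofFn x).prod ⊗ₜ[R] (List.ofFn y).prod := by
  induction n with
  | zero => simp [Algebra.TensorProduct.one_def]
  | succ n ih => simp [List.ofFn_succ, ih, Algebra.TensorProduct.tmul_mul_tmul]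

instance Setoid.instFinite {α : Type*} [Finite α] : Finite (Setoid α) :=
  Finite.of_injective _ fun _ _ h => Setoid.eq_iff_rel_eq.mpr h

theorem Setoid.card_subtype_le_ker {α β : Type*} [Finite α] (s : Setoid α) :
    Nat.card {g : α → β // s ≤ Setoid.ker g} = Nat.card β ^ Nat.card (Quotient s) := by
  rw [Nat.card_congr s.liftEquiv, Nat.card_fun]

open Finset in
theorem Setoid.sum_card_subtype_le_ker_sq {α β : Type*} [Fintype α] [DecidableEq α] [Fintype β]
    [Fintype (Setoid α)] (p : Setoid α → Prop) :
    ∑ g : α → β, Nat.card {π : Setoid α // p π ∧ π ≤ Setoid.ker g} ^ 2 =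
      ∑ pr ∈ univ.filter (fun pr : Setoid α × Setoid α => p pr.1 ∧ p pr.2),
        Nat.card β ^ Nat.card (Quotient (pr.1 ⊔ pr.2)) := by
  have hsq (g : α → β) : Nat.card {π : Setoid α // p π ∧ π ≤ Setoid.ker g} ^ 2 =
      #((univ.filter fun pr : Setoid α × Setoid α => p pr.1 ∧ p pr.2).filter
        fun pr => pr.1 ⊔ pr.2 ≤ Setoid.ker g) := by
    rw [Nat.card_eq_fintype_card, Fintype.card_subtype, sq, ← card_product]
    congr 1
    ext pr
    simp only [mem_product, mem_filter, mem_univ, true_and, sup_le_iff]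
    tauto
  simp_rw [hsq, ← Setoid.card_subtype_le_ker, Nat.card_eq_fintype_card, Fintype.card_subtype]
  simp only [card_filter]
  exact sum_comm

theorem orbitSetoid_le_iff {m : ℕ} {f : Fin m → Fin m} {T : Setoid (Fin m)} :
    orbitSetoid f ≤ T ↔ ∀ x, T.r x (f x) :=
  ⟨fun h _ => h (Relation.EqvGen.rel _ _ rfl),
    fun h => Setoid.eqvGen_le fun x _ hxy => hxy ▸ h x⟩

theorem iff_of_orbitSetoid_rel {m : ℕ} {f : Fin m → Fin m} (P : Fin m → Prop)
    (hP : ∀ x, P (f x) ↔ P x) {x y : Fin m} (hxy : (orbitSetoid f).r x y) : P x ↔ P y :=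
  propext_iff.mp
    ((orbitSetoid_le_iff (T := Setoid.ker P)).mpr (fun x => propext (hP x).symm) hxy)

section Blocks

open Finset

variable {n : ℕ} {S : Setoid (Fin n)}

@[simp] theorem mem_blockOf {i j : Fin n} : j ∈ blockOf S i ↔ S.r i j := by
  simp [blockOf]

variable (S) in
theorem rel_nextP (i : Fin n) : S.r i (nextP S i) := by
  unfold nextP
  split_ifs with h
  · exact (mem_filter.mp (min'_mem _ h)).1 |> mem_blockOf.mp
  · exact mem_blockOf.mp (min'_mem _ _)

variable (S) in
theorem rel_prevP (i : Fin n) : S.r i (prevP S i) := by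
  unfold prevP
  split_ifs with h
  · exact (mem_filter.mp (max'_mem _ h)).1 |> mem_blockOf.mp
  · exact mem_blockOf.mp (max'_mem _ _)

variable (S) in
theorem nextP_spec (i : Fin n) :
    (i < nextP S i ∧ ∀ m, S.r i m → i < m → nextP S i ≤ m) ∨
      ((∀ m, S.r i m → m ≤ i) ∧ ∀ m, S.r i m → nextP S i ≤ m) := by
  unfold nextP
  split_ifs with h
  · exact .inl ⟨(mem_filter.mp (min'_mem _ h)).2,
      fun m hm him => min'_le _ m (by simp [hm, him])⟩
  · refine .inr ⟨fun m hm => ?_, fun m hm => min'_le _ m (mem_blockOf.mpr hm)⟩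
    by_contra hlt
    exact h ⟨m, by simp [hm, not_le.mp hlt]⟩

variable (S) in
theorem prevP_spec (i : Fin n) :
    (prevP S i < i ∧ ∀ m, S.r i m → m < i → m ≤ prevP S i) ∨
      ((∀ m, S.r i m → i ≤ m) ∧ ∀ m, S.r i m → m ≤ prevP S i) := by
  unfold prevP
  split_ifs with h
  · exact .inl ⟨(mem_filter.mp (max'_mem _ h)).2,
      fun m hm hmi => le_max' _ m (by simp [hm, hmi])⟩
  · refine .inr ⟨fun m hm => ?_, fun m hm => le_max' _ m (mem_blockOf.mpr hm)⟩
    by_contra hlt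
    exact h ⟨m, by simp [hm, not_le.mp hlt]⟩

variable (S) in
theorem prevP_nextP (i : Fin n) : prevP S (nextP S i) = i := by
  have hi : S.r (nextP S i) i := S.iseqv.symm (rel_nextP S i)
  have hblock {m} (hm : S.r (nextP S i) m) : S.r i m := S.iseqv.trans (rel_nextP S i) hm
  rcases nextP_spec S i with ⟨hlt, hmin⟩ | ⟨hmax, hmin⟩ <;>
    rcases prevP_spec S (nextP S i) with ⟨hlt', hmax'⟩ | ⟨hmin', hmax'⟩
  · refine le_antisymm (not_lt.mp fun h => ?_) (hmax' i hi hlt)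
    exact hlt'.not_ge (hmin _ (hblock (rel_prevP S _)) h)
  · exact absurd (hmin' i hi) hlt.not_ge
  · exact absurd (hmin _ (hblock (rel_prevP S _))) hlt'.not_ge
  · exact le_antisymm (hmax _ (hblock (rel_prevP S _))) (hmax' i hi)

variable (S) in
theorem nextP_prevP (i : Fin n) : nextP S (prevP S i) = i := by
  have hi : S.r (prevP S i) i := S.iseqv.symm (rel_prevP S i)
  have hblock {m} (hm : S.r (prevP S i) m) : S.r i m := S.iseqv.trans (rel_prevP S i) hm
  rcases prevP_spec S i with ⟨hlt, hmax⟩ | ⟨hmin, hmax⟩ <;>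
    rcases nextP_spec S (prevP S i) with ⟨hlt', hmin'⟩ | ⟨hmax', hmin'⟩
  · refine le_antisymm (hmin' i hi hlt) (not_lt.mp fun h => ?_)
    exact hlt'.not_ge (hmax _ (hblock (rel_nextP S _)) h)
  · exact absurd (hmax' i hi) hlt.not_ge
  · exact absurd (hmax _ (hblock (rel_nextP S _))) hlt'.not_ge
  · exact le_antisymm (hmin' i hi) (hmin _ (hblock (rel_nextP S _)))

variable (S) in
theorem orbitSetoid_nextP : orbitSetoid (nextP S) = S := by
  refine le_antisymm (orbitSetoid_le_iff.mpr (rel_nextP S)) fun j k hjk => ?_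
  let m₀ := (blockOf S j).min' ⟨j, mem_blockOf.mpr (S.iseqv.refl j)⟩
  have hm₀ : S.r j m₀ := mem_blockOf.mp (min'_mem _ _)
  suffices h : ∀ k, S.r j k → (orbitSetoid (nextP S)).r m₀ k from
    (orbitSetoid (nextP S)).iseqv.trans
      ((orbitSetoid (nextP S)).iseqv.symm (h j (S.iseqv.refl j))) (h k hjk)
  intro k
  induction k using WellFoundedLT.induction with
  | ind k ih =>
    intro hk
    rcases prevP_spec S k with ⟨hlt, -⟩ | ⟨hmin, -⟩
    · exact (orbitSetoid (nextP S)).iseqv.trans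
        (ih _ hlt (S.iseqv.trans hk (rel_prevP S k))) (Relation.EqvGen.rel _ _ (nextP_prevP S k))
    · have : k = m₀ := le_antisymm (hmin _ (S.iseqv.trans (S.iseqv.symm hk) hm₀))
        (min'_le _ _ (mem_blockOf.mpr hk))
      exact this ▸ (orbitSetoid (nextP S)).iseqv.refl k

theorem IsNC.mem_Ioo_of_rel (hS : IsNC S) {j k t u : Fin n} (hjk : S.r j k) (hjt : j < t)
    (htk : t < k) (hnjt : ¬ S.r j t) (htu : S.r t u) : j < u ∧ u < k := by
  have hnju : ¬ S.r j u := fun h => hnjt (S.iseqv.trans h (S.iseqv.symm htu))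
  rcases lt_trichotomy u j with huj | rfl | hju
  · exact (hnju (S.iseqv.symm (hS u j t k huj hjt htk (S.iseqv.symm htu) hjk))).elim
  · exact absurd (S.iseqv.refl _) hnju
  refine ⟨hju, lt_of_le_of_ne (not_lt.mp fun hku => hnjt (hS j t k u hjt htk hku hjk htu)) ?_⟩
  rintro rfl
  exact hnju hjk

end Blocks

section Doubling

variable {n : ℕ}

def halve (x : Fin (2 * n)) : Fin n := ⟨x / 2, by omega⟩

@[simp] theorem dEven_val (j : Fin n) : (dEven j : ℕ) = 2 * j := rfl

@[simp] theorem dOdd_val (j : Fin n) : (dOdd j : ℕ) = 2 * j + 1 := rfl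

@[simp] theorem halve_dEven (j : Fin n) : halve (dEven j) = j := Fin.ext (by simp [halve])

@[simp] theorem halve_dOdd (j : Fin n) : halve (dOdd j) = j := Fin.ext (by simp [halve]; omega)

theorem dEven_halve {x : Fin (2 * n)} (h : x.val % 2 = 0) : dEven (halve x) = x :=
  Fin.ext (by simp [halve]; omega)

theorem dOdd_halve {x : Fin (2 * n)} (h : x.val % 2 = 1) : dOdd (halve x) = x :=
  Fin.ext (by simp [halve]; omega)

theorem dEven_injective : Function.Injective (dEven (n := n)) :=
  fun i j h => by simpa using congrArg halve h

theorem dOdd_ne_dEven (i j : Fin n) : dOdd i ≠ dEven j :=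
  Fin.ne_of_val_ne (by simp; omega)

@[simp] theorem dEven_lt_dEven {i j : Fin n} : dEven i < dEven j ↔ i < j := by
  simp only [Fin.lt_def, dEven_val]; omega

@[simp] theorem dOdd_lt_dOdd {i j : Fin n} : dOdd i < dOdd j ↔ i < j := by
  simp only [Fin.lt_def, dOdd_val]; omega

@[simp] theorem dEven_lt_dOdd {i j : Fin n} : dEven i < dOdd j ↔ i ≤ j := by
  simp only [Fin.lt_def, Fin.le_def, dEven_val, dOdd_val]; omega

@[simp] theorem dOdd_lt_dEven {i j : Fin n} : dOdd i < dEven j ↔ i < j := by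
  simp only [Fin.lt_def, dEven_val, dOdd_val]; omega

@[elab_as_elim]
theorem dEven_dOdd_cases {motive : Fin (2 * n) → Prop} (even : ∀ j, motive (dEven j))
    (odd : ∀ j, motive (dOdd j)) (x : Fin (2 * n)) : motive x := by
  obtain ⟨j, hj | hj⟩ := Nat.even_or_odd' x.val
  · exact (Fin.ext hj : x = dEven ⟨j, by omega⟩) ▸ even _
  · exact (Fin.ext hj : x = dOdd ⟨j, by omega⟩) ▸ odd _

theorem prod_ofFn_sq_eq_prod_ofFn_halve {M : Type*} [Monoid M] (f : Fin n → M) :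
    (List.ofFn fun k => f k ^ 2).prod = (List.ofFn fun x : Fin (2 * n) => f (halve x)).prod := by
  rw [List.ofFn_mul', List.prod_flatten, List.map_ofFn]
  congr 1
  refine List.ofFn_inj.mpr (funext fun k => ?_)
  simp only [Function.comp_apply, List.ofFn_succ, List.ofFn_zero, List.prod_cons, List.prod_nil,
    mul_one, sq]
  congr 2 <;> ext <;> simp [halve]; omega

end Doubling

section Involution

variable {m : ℕ} {f : Fin m → Fin m}

def involutionSetoid (f : Fin m → Fin m) (hf : Function.Involutive f) : Setoid (Fin m) where
  r x y := x = y ∨ f x = y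
  iseqv := {
    refl := fun _ => .inl rfl
    symm := by
      rintro x _ (rfl | rfl)
      exacts [.inl rfl, .inr (hf x)]
    trans := by
      rintro x _ _ (rfl | rfl) (rfl | rfl)
      exacts [.inl rfl, .inr rfl, .inr rfl, .inl (hf x).symm] }

theorem isPairing_involutionSetoid (hf : Function.Involutive f) (hne : ∀ x, f x ≠ x) :
    IsPairing (involutionSetoid f hf) :=
  fun x => ⟨f x, hne x, .inr rfl, fun _ hz => hz.imp Eq.symm Eq.symm⟩

theorem isNC_involutionSetoid (hf : Function.Involutive f)
    (h : ∀ x z, x < f x → x < z → z < f x → x < f z ∧ f z < f x) :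
    IsNC (involutionSetoid f hf) := by
  rintro a b c d hab hbc hcd (rfl | rfl) (rfl | rfl)
  · exact absurd (hab.trans hbc) (lt_irrefl _)
  · exact absurd (hab.trans hbc) (lt_irrefl _)
  · exact absurd (hbc.trans hcd) (lt_irrefl _)
  · exact absurd (h a b (hab.trans hbc) hab hbc).2 hcd.not_gt

end Involution

section Arch

variable {n : ℕ} {S : Setoid (Fin n)}

variable (S) in
noncomputable def archPartner (x : Fin (2 * n)) : Fin (2 * n) :=
  if x.val % 2 = 0 then dOdd (prevP S (halve x)) else dEven (nextP S (halve x))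

@[simp] theorem archPartner_dEven (j : Fin n) : archPartner S (dEven j) = dOdd (prevP S j) := by
  simp [archPartner]

@[simp] theorem archPartner_dOdd (j : Fin n) : archPartner S (dOdd j) = dEven (nextP S j) := by
  simp [archPartner]

variable (S) in
theorem archPartner_involutive : Function.Involutive (archPartner S) := by
  intro x
  induction x using dEven_dOdd_cases <;> simp [nextP_prevP, prevP_nextP]

theorem archPartner_ne (x : Fin (2 * n)) : archPartner S x ≠ x := by
  induction x using dEven_dOdd_cases with
  | even j => simpa using dOdd_ne_dEven _ j
  | odd j => simpa using (dOdd_ne_dEven j _).symm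

variable (S) in
theorem archSetoid_eq_involutionSetoid :
    archSetoid S = involutionSetoid (archPartner S) (archPartner_involutive S) := by
  refine le_antisymm (Setoid.eqvGen_le ?_) ?_
  · rintro _ _ ⟨j, rfl, rfl⟩
    exact .inr (archPartner_dOdd j)
  · rintro x _ (rfl | rfl)
    · exact (archSetoid S).iseqv.refl x
    induction x using dEven_dOdd_cases with
    | even j =>
      refine (archSetoid S).iseqv.symm (Relation.EqvGen.rel _ _ ⟨prevP S j, ?_, ?_⟩) <;>
        simp [nextP_prevP]
    | odd j => exact Relation.EqvGen.rel _ _ ⟨j, rfl, archPartner_dOdd j⟩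

variable (S) in
theorem isPairing_archSetoid : IsPairing (archSetoid S) := by
  rw [archSetoid_eq_involutionSetoid]
  exact isPairing_involutionSetoid _ archPartner_ne

/-- The arcs of `archSetoid S` join consecutive elements `j < nextP S j` of a block, or the
minimum `k` of a block to its maximum `prevP S k`. Since `S` is non-crossing, every other block
lies entirely inside or entirely outside such an arc. -/
theorem archPartner_mem_Ioo_of_dOdd (hS : IsNC S) {j : Fin n} (hj : j < nextP S j)
    {z : Fin (2 * n)} (h₁ : dOdd j < z) (h₂ : z < dEven (nextP S j)) :
    dOdd j < archPartner S z ∧ archPartner S z < dEven (nextP S j) := by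
  have hmin : ∀ m, S.r j m → j < m → nextP S j ≤ m := by
    rcases nextP_spec S j with ⟨-, h⟩ | ⟨h, -⟩
    · exact h
    · exact absurd (h _ (rel_nextP S j)) hj.not_ge
  have hgap {t} (ht₁ : j < t) (ht₂ : t < nextP S j) {u} (hu : S.r t u) :
      j < u ∧ u < nextP S j :=
    hS.mem_Ioo_of_rel (rel_nextP S j) ht₁ ht₂ (fun h => (hmin t h ht₁).not_gt ht₂) hu
  induction z using dEven_dOdd_cases with
  | even t =>
    simp only [archPartner_dEven, dOdd_lt_dEven, dOdd_lt_dOdd, dEven_lt_dEven] at h₁ h₂ ⊢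
    exact hgap h₁ h₂ (rel_prevP S t)
  | odd t =>
    simp only [archPartner_dOdd, dOdd_lt_dEven, dOdd_lt_dOdd, dEven_lt_dEven] at h₁ h₂ ⊢
    exact hgap h₁ h₂ (rel_nextP S t)

theorem archPartner_mem_Ioo_of_dEven (hS : IsNC S) {k : Fin n} (hk : k ≤ prevP S k)
    {z : Fin (2 * n)} (h₁ : dEven k < z) (h₂ : z < dOdd (prevP S k)) :
    dEven k < archPartner S z ∧ archPartner S z < dOdd (prevP S k) := by
  have hblock : ∀ m, S.r k m → k ≤ m ∧ m ≤ prevP S k := by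
    rcases prevP_spec S k with ⟨h, -⟩ | ⟨h, h'⟩
    · exact absurd h hk.not_gt
    · exact fun m hm => ⟨h m hm, h' m hm⟩
  have hgap {t} (ht₁ : k < t) (ht₂ : t < prevP S k) (hkt : ¬ S.r k t) {u} (hu : S.r t u) :=
    hS.mem_Ioo_of_rel (rel_prevP S k) ht₁ ht₂ hkt hu
  induction z using dEven_dOdd_cases with
  | even t =>
    simp only [archPartner_dEven, dEven_lt_dEven, dEven_lt_dOdd, dOdd_lt_dOdd] at h₁ h₂ ⊢
    by_cases hkt : S.r k t
    · have hkp := S.iseqv.trans hkt (rel_prevP S t)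
      refine ⟨(hblock _ hkp).1, (hblock _ hkp).2.lt_of_ne fun h => h₁.ne' ?_⟩
      simpa [nextP_prevP] using congrArg (nextP S) h
    · have ht : t < prevP S k := h₂.lt_of_ne fun h => hkt (h ▸ rel_prevP S k)
      exact (hgap h₁ ht hkt (rel_prevP S t)).imp le_of_lt id
  | odd t =>
    simp only [archPartner_dOdd, dEven_lt_dEven, dEven_lt_dOdd, dOdd_lt_dOdd] at h₁ h₂ ⊢
    by_cases hkt : S.r k t
    · have hkn := S.iseqv.trans hkt (rel_nextP S t)
      refine ⟨(hblock _ hkn).1.lt_of_ne fun h => h₂.ne' ?_, (hblock _ hkn).2⟩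
      simpa [prevP_nextP] using congrArg (prevP S) h
    · have ht : k < t := h₁.lt_of_ne fun h => hkt (h ▸ S.iseqv.refl k)
      exact (hgap ht h₂ hkt (rel_nextP S t)).imp id le_of_lt

theorem isNC_archSetoid (hS : IsNC S) : IsNC (archSetoid S) := by
  rw [archSetoid_eq_involutionSetoid]
  refine isNC_involutionSetoid _ fun x z hx h₁ h₂ => ?_
  induction x using dEven_dOdd_cases with
  | even k =>
    rw [archPartner_dEven] at hx h₂ ⊢
    exact archPartner_mem_Ioo_of_dEven hS (dEven_lt_dOdd.mp hx) h₁ h₂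
  | odd j =>
    rw [archPartner_dOdd] at hx h₂ ⊢
    exact archPartner_mem_Ioo_of_dOdd hS (dOdd_lt_dEven.mp hx) h₁ h₂

theorem archSetoid_le_ker {β : Type*} {g : Fin n → β} (h : S ≤ Setoid.ker g) :
    archSetoid S ≤ Setoid.ker fun x => g (halve x) :=
  Setoid.eqvGen_le fun _ _ ⟨j, hx, hy⟩ => by
    simpa [hx, hy] using h (rel_nextP S j)

end Arch

namespace IsPairing

variable {m : ℕ} {σ : Setoid (Fin m)} (hp : IsPairing σ)

noncomputable def partner (x : Fin m) : Fin m := (hp x).choose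

theorem partner_ne (x : Fin m) : hp.partner x ≠ x := (hp x).choose_spec.1

theorem rel_partner (x : Fin m) : σ.r x (hp.partner x) := (hp x).choose_spec.2.1

theorem eq_partner_of_rel {x y : Fin m} (h : σ.r x y) (hne : y ≠ x) : y = hp.partner x :=
  ((hp x).choose_spec.2.2 y h).resolve_left hne

theorem partner_involutive : Function.Involutive hp.partner := fun x =>
  (hp.eq_partner_of_rel (σ.iseqv.symm (hp.rel_partner x)) (hp.partner_ne x).symm).symm

theorem eq_involutionSetoid : σ = involutionSetoid hp.partner hp.partner_involutive := by
  refine Setoid.ext fun x y => ⟨fun h => ?_, ?_⟩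
  · exact (eq_or_ne y x).imp Eq.symm fun hne => (hp.eq_partner_of_rel h hne).symm
  · rintro (rfl | rfl)
    exacts [σ.iseqv.refl x, hp.rel_partner x]

theorem partner_mem_Ioo (hnc : IsNC σ) {x z : Fin m} (h₁ : x < z)
    (h₂ : z < hp.partner x) : x < hp.partner z ∧ hp.partner z < hp.partner x := by
  have hxz : ¬ σ.r x z := fun h => h₂.ne (hp.eq_partner_of_rel h h₁.ne')
  have hz := hp.rel_partner z
  have hx' := hp.rel_partner x
  refine ⟨lt_of_not_ge fun hw => hxz ?_, lt_of_not_ge fun hw => hxz ?_⟩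
  · rcases hw.lt_or_eq with hw | hw
    · exact σ.iseqv.trans (σ.iseqv.symm (hnc _ _ _ _ hw h₁ h₂ (σ.iseqv.symm hz) hx'))
        (σ.iseqv.symm hz)
    · exact σ.iseqv.symm (hw ▸ hz)
  · rcases hw.lt_or_eq with hw | hw
    · exact hnc _ _ _ _ h₁ h₂ hw hx' hz
    · exact σ.iseqv.trans hx' (hw ▸ σ.iseqv.symm hz)

/-- The partner involution acts without fixed points on the interior of an arc, so the
interior has an even number of points. -/
theorem partner_val_mod_two_ne (hnc : IsNC σ) (x : Fin m) :
    (hp.partner x).val % 2 ≠ x.val % 2 := by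
  have key {x : Fin m} (hx : x < hp.partner x) : (hp.partner x).val % 2 ≠ x.val % 2 := by
    have heven := Function.Involutive.even_card_of_forall_ne
      (f := fun z : Finset.Ioo x (hp.partner x) => ⟨hp.partner z, by
        simpa using hp.partner_mem_Ioo hnc (Finset.mem_Ioo.mp z.2).1
          (Finset.mem_Ioo.mp z.2).2⟩)
      (fun z => Subtype.ext (hp.partner_involutive z))
      (fun z h => hp.partner_ne z (congrArg Subtype.val h))
    rw [Fintype.card_coe, Fin.card_Ioo] at heven
    rw [Fin.lt_def] at hx
    obtain ⟨t, ht⟩ := heven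
    omega
  rcases lt_or_gt_of_ne (hp.partner_ne x) with h | h
  · have := key (x := hp.partner x) (by rwa [hp.partner_involutive])
    rw [hp.partner_involutive] at this
    exact this.symm
  · exact key h

end IsPairing

section Unarch

variable {n : ℕ} {σ : Setoid (Fin (2 * n))} (hp : IsPairing σ)

/-- In a non-crossing pairing of `Fin (2 * n)` partners have opposite parity, so `halfPartner`
is a permutation of `Fin n`; its orbits form the partition whose arch pairing is `σ`. -/
noncomputable def IsPairing.halfPartner (j : Fin n) : Fin n := halve (hp.partner (dOdd j))

namespace IsPairing

theorem partner_dOdd (hnc : IsNC σ) (j : Fin n) :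
    hp.partner (dOdd j) = dEven (hp.halfPartner j) :=
  (dEven_halve (by have := hp.partner_val_mod_two_ne hnc (dOdd j); simp at this; omega)).symm

theorem partner_dEven_halfPartner (hnc : IsNC σ) (j : Fin n) :
    hp.partner (dEven (hp.halfPartner j)) = dOdd j := by
  rw [← hp.partner_dOdd hnc, hp.partner_involutive]

theorem exists_partner_dEven (hnc : IsNC σ) (t : Fin n) :
    ∃ s, hp.partner (dEven t) = dOdd s ∧ hp.halfPartner s = t := by
  have hs : hp.partner (dEven t) = dOdd (halve (hp.partner (dEven t))) :=
    (dOdd_halve (by have := hp.partner_val_mod_two_ne hnc (dEven t); simp at this; omega)).symm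
  refine ⟨_, hs, dEven_injective ?_⟩
  rw [← hp.partner_dOdd hnc, ← hs, hp.partner_involutive]

theorem halfPartner_injective (hnc : IsNC σ) : Function.Injective hp.halfPartner := by
  intro i j h
  have := hp.partner_involutive.injective
    ((hp.partner_dOdd hnc i).trans ((congrArg dEven h).trans (hp.partner_dOdd hnc j).symm))
  simpa using congrArg halve this

theorem halfPartner_mem_Ioo_iff (hnc : IsNC σ) (j t : Fin n) :
    (j < hp.halfPartner t ∧ hp.halfPartner t < hp.halfPartner j) ↔
      (j < t ∧ t < hp.halfPartner j) := by
  have harc {z} (h₁ : dOdd j < z) (h₂ : z < dEven (hp.halfPartner j)) :=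
    hp.partner_mem_Ioo hnc (z := z) h₁ (by rwa [hp.partner_dOdd hnc])
  constructor
  · rintro ⟨h₁, h₂⟩
    simpa [hp.partner_dOdd hnc, hp.partner_dEven_halfPartner hnc]
      using harc (z := dEven (hp.halfPartner t)) (by simpa) (by simpa)
  · rintro ⟨h₁, h₂⟩
    simpa [hp.partner_dOdd hnc] using harc (z := dOdd t) (by simpa) (by simpa)

theorem halfPartner_mem_Icc_iff (hnc : IsNC σ) {j : Fin n} (hj : hp.halfPartner j ≤ j)
    (t : Fin n) :
    (hp.halfPartner j ≤ hp.halfPartner t ∧ hp.halfPartner t ≤ j) ↔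
      (hp.halfPartner j ≤ t ∧ t ≤ j) := by
  have harc {z} (h₁ : dEven (hp.halfPartner j) < z) (h₂ : z < dOdd j) :=
    hp.partner_mem_Ioo hnc (z := z) h₁ (by rwa [hp.partner_dEven_halfPartner hnc])
  constructor
  · rintro ⟨h₁, h₂⟩
    rcases h₁.lt_or_eq with h₁ | h₁
    · have := harc (z := dEven (hp.halfPartner t)) (by simpa) (by simpa)
      simp only [hp.partner_dEven_halfPartner hnc, dEven_lt_dOdd, dOdd_lt_dOdd] at this
      exact this.imp id le_of_lt
    · exact hp.halfPartner_injective hnc h₁ ▸ ⟨hj, le_rfl⟩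
  · rintro ⟨h₁, h₂⟩
    rcases h₂.lt_or_eq with h₂ | rfl
    · have := harc (z := dOdd t) (by simpa) (by simpa)
      simp only [hp.partner_dOdd hnc, hp.partner_dEven_halfPartner hnc, dEven_lt_dEven,
        dEven_lt_dOdd] at this
      exact this.imp le_of_lt id
    · exact ⟨le_rfl, hj⟩

theorem nextP_orbitSetoid_halfPartner (hnc : IsNC σ) (j : Fin n) :
    nextP (orbitSetoid hp.halfPartner) j = hp.halfPartner j := by
  set π := orbitSetoid hp.halfPartner
  have hj : π.r j (hp.halfPartner j) := Relation.EqvGen.rel _ _ rfl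
  rcases lt_or_ge j (hp.halfPartner j) with hlt | hge
  · have hgap {m} (hm : π.r j m) (h₁ : j < m) : hp.halfPartner j ≤ m := not_lt.mp fun h₂ =>
      lt_irrefl j ((iff_of_orbitSetoid_rel (fun t => j < t ∧ t < hp.halfPartner j)
        (hp.halfPartner_mem_Ioo_iff hnc j) hm).mpr ⟨h₁, h₂⟩).1
    rcases nextP_spec π j with ⟨h₁, hmin⟩ | ⟨hmax, -⟩
    · exact le_antisymm (hmin _ hj hlt) (hgap (rel_nextP π j) h₁)
    · exact absurd (hmax _ hj) hlt.not_ge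
  · have hblock {m} (hm : π.r j m) : hp.halfPartner j ≤ m ∧ m ≤ j :=
      (iff_of_orbitSetoid_rel (fun t => hp.halfPartner j ≤ t ∧ t ≤ j)
        (hp.halfPartner_mem_Icc_iff hnc hge) hm).mp ⟨hge, le_rfl⟩
    rcases nextP_spec π j with ⟨h₁, -⟩ | ⟨-, hmin⟩
    · exact absurd (hblock (rel_nextP π j)).2 h₁.not_ge
    · exact le_antisymm (hmin _ hj) (hblock (rel_nextP π j)).1

/-- For a crossing `a < b < c < d`, let `u` be the last element `≤ b` of the block of `a`:
then `u < b < nextP u ≤ c`, and the block of `b` is trapped in the arc `(u, nextP u)`. -/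
theorem isNC_orbitSetoid_halfPartner (hnc : IsNC σ) : IsNC (orbitSetoid hp.halfPartner) := by
  set π := orbitSetoid hp.halfPartner
  intro a b c d hab hbc hcd hac hbd
  by_contra hnab
  let U := Finset.univ.filter fun m => π.r a m ∧ m ≤ b
  have hU : U.Nonempty := ⟨a, by simp [U, hab.le]⟩
  obtain ⟨hau, hub⟩ := (Finset.mem_filter.mp (U.max'_mem hU)).2
  set u := U.max' hU
  have hub' : u < b := hub.lt_of_ne fun h => hnab (h ▸ hau)
  have huc : π.r u c := π.iseqv.trans (π.iseqv.symm hau) hac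
  rcases nextP_spec π u with ⟨h₁, hmin⟩ | ⟨hmax, -⟩
  · rw [hp.nextP_orbitSetoid_halfPartner hnc] at h₁ hmin
    have hbp : b < hp.halfPartner u := not_le.mp fun h => h₁.not_ge (U.le_max' _
      (by simp [U, π.iseqv.trans hau (Relation.EqvGen.rel _ _ rfl), h]))
    have hd := (iff_of_orbitSetoid_rel (fun t => u < t ∧ t < hp.halfPartner u)
      (hp.halfPartner_mem_Ioo_iff hnc u) hbd).mp ⟨hub', hbp⟩
    exact (hmin c huc (hub'.trans hbc)).not_gt (hcd.trans hd.2)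
  · exact (hmax c huc).not_gt (hub'.trans hbc)

theorem orbitSetoid_halfPartner_le_ker (hnc : IsNC σ) {β : Type*} {g : Fin n → β}
    (h : σ ≤ Setoid.ker fun x => g (halve x)) : orbitSetoid hp.halfPartner ≤ Setoid.ker g :=
  orbitSetoid_le_iff.mpr fun j => by
    simpa [hp.partner_dOdd hnc] using h (hp.rel_partner (dOdd j))

theorem archSetoid_orbitSetoid_halfPartner (hnc : IsNC σ) :
    archSetoid (orbitSetoid hp.halfPartner) = σ := by
  have h : archPartner (orbitSetoid hp.halfPartner) = hp.partner := funext fun x => by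
    induction x using dEven_dOdd_cases with
    | even t =>
      obtain ⟨s, hs, rfl⟩ := hp.exists_partner_dEven hnc t
      rw [archPartner_dEven, hs, ← hp.nextP_orbitSetoid_halfPartner hnc, prevP_nextP]
    | odd j => rw [archPartner_dOdd, hp.nextP_orbitSetoid_halfPartner hnc, hp.partner_dOdd hnc]
  rw [archSetoid_eq_involutionSetoid]
  refine Eq.trans ?_ hp.eq_involutionSetoid.symm
  congr

end IsPairing

theorem IsPairing.halfPartner_archSetoid (S : Setoid (Fin n)) (hp : IsPairing (archSetoid S)) :
    hp.halfPartner = nextP S := funext fun j => by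
  have h : hp.partner (dOdd j) = dEven (nextP S j) :=
    (hp.eq_partner_of_rel (Relation.EqvGen.rel _ _ ⟨j, rfl, rfl⟩) (dOdd_ne_dEven j _).symm).symm
  simp [IsPairing.halfPartner, h]

noncomputable def archEquiv {β : Type*} (g : Fin n → β) :
    {π : Setoid (Fin n) // IsNC π ∧ π ≤ Setoid.ker g} ≃
      {σ : Setoid (Fin (2 * n)) //
        IsNC σ ∧ IsPairing σ ∧ σ ≤ Setoid.ker fun x => g (halve x)} where
  toFun π := ⟨archSetoid π.1, isNC_archSetoid π.2.1, isPairing_archSetoid _,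
    archSetoid_le_ker π.2.2⟩
  invFun σ := ⟨orbitSetoid σ.2.2.1.halfPartner, σ.2.2.1.isNC_orbitSetoid_halfPartner σ.2.1,
    σ.2.2.1.orbitSetoid_halfPartner_le_ker σ.2.1 σ.2.2.2⟩
  left_inv π := Subtype.ext (by simp only [IsPairing.halfPartner_archSetoid, orbitSetoid_nextP])
  right_inv σ := Subtype.ext (σ.2.2.1.archSetoid_orbitSetoid_halfPartner σ.2.1)

end Unarch

open TensorProduct in
theorem tensor_semicircular_squares_moments_general
    (A : Type*) [Ring A] [Algebra ℂ A]
    (φ : A →ₗ[ℂ] ℂ)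
    (d : ℕ) (a : Fin d → A)
    (hfree : ∀ (m : ℕ) (i : Fin m → Fin d),
      φ ((List.ofFn fun k => a (i k)).prod) =
        (Nat.card {σ : Setoid (Fin m) //
          IsNC σ ∧ IsPairing σ ∧ σ ≤ Setoid.ker i} : ℂ)) :
    ∀ n : ℕ, 0 < n →
      (TensorProduct.lid ℂ ℂ) ((TensorProduct.map φ φ)
          ((∑ i, ((a i) ^ 2) ⊗ₜ[ℂ] ((a i) ^ 2)) ^ n)) =
        ∑ᶠ pr ∈ {pr : Setoid (Fin n) × Setoid (Fin n) | IsNC pr.1 ∧ IsNC pr.2},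
          (d : ℂ) ^ (Nat.card (Quotient (pr.1 ⊔ pr.2))) := by
  intro n _
  have hterm (g : Fin n → Fin d) :
      TensorProduct.lid ℂ ℂ (TensorProduct.map φ φ
        (List.ofFn fun k => (a (g k) ^ 2) ⊗ₜ[ℂ] (a (g k) ^ 2)).prod) =
        (Nat.card {π : Setoid (Fin n) // IsNC π ∧ π ≤ Setoid.ker g} : ℂ) ^ 2 := by
    rw [Algebra.TensorProduct.list_prod_ofFn_tmul, TensorProduct.map_tmul,
      TensorProduct.lid_tmul, smul_eq_mul, prod_ofFn_sq_eq_prod_ofFn_halve fun k => a (g k),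
      hfree, Nat.card_congr (archEquiv g).symm, sq]
  have := Fintype.ofFinite (Setoid (Fin n))
  rw [sum_pow_eq_sum_prod_ofFn, map_sum, map_sum, Finset.sum_congr rfl fun g _ => hterm g,
    ← Finset.coe_filter_univ, finsum_mem_coe_finset]
  have hcount := Setoid.sum_card_subtype_le_ker_sq (α := Fin n) (β := Fin d) IsNC
  rw [Nat.card_fin] at hcount
  exact_mod_cast hcount

open TensorProduct in
/-- Let `a_1,…,a_d` be a free family of self-adjoint standard semicircular
elements of a `*`-probability space `(𝒜,φ)` (so that mixed moments
`φ(a_{i(1)}⋯a_{i(m)})` count the non-crossing pairings `σ` of `{1,…,m}` with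
`σ ≤ ker i`), and let `y = Σ_i a_i² ⊗ a_i² ∈ (𝒜 ⊗ 𝒜, φ ⊗ φ)`.  Then
`(φ⊗φ)(y^n) = Σ_{π,ρ ∈ NC(n)} d^{|π ∨̃ ρ|}`, where `∨̃` is the join in the
lattice of all partitions of `{1,…,n}` and `|·|` is the number of blocks. -/
theorem tensor_semicircular_squares_moments
    (A : Type*) [Ring A] [Algebra ℂ A] [StarRing A]
    (φ : A →ₗ[ℂ] ℂ) (hφ1 : φ 1 = 1)
    (hpos : ∀ z : A, ∃ r : ℝ, 0 ≤ r ∧ φ (star z * z) = (r : ℂ))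
    (d : ℕ) (a : Fin d → A) (hsa : ∀ i, star (a i) = a i)
    (hfree : ∀ (m : ℕ) (i : Fin m → Fin d),
      φ ((List.ofFn fun k => a (i k)).prod) =
        (Nat.card {σ : Setoid (Fin m) //
          IsNC σ ∧ IsPairing σ ∧ σ ≤ Setoid.ker i} : ℂ)) :
    ∀ n : ℕ, 0 < n →
      (TensorProduct.lid ℂ ℂ) ((TensorProduct.map φ φ)
          ((∑ i, ((a i) ^ 2) ⊗ₜ[ℂ] ((a i) ^ 2)) ^ n)) =
        ∑ᶠ pr ∈ {pr : Setoid (Fin n) × Setoid (Fin n) | IsNC pr.1 ∧ IsNC pr.2},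
          (d : ℂ) ^ (Nat.card (Quotient (pr.1 ⊔ pr.2))) :=
  tensor_semicircular_squares_moments_general A φ d a hfree
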